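/- Let R₂ = ℝ[U,V]/(U²+V²+1). The sequence of R₂-module maps 0 → R₂ → R₂ ⊕ R₂ → R₂ → 0, where the first map sends a to (U·a, V·a) and the second sends (a,b) to −V·a + U·b, is exact: the first map is injective, the second map is surjective, and the kernel of the second map equals the range of the first. -/

import Mathlib

noncomputable section

/-- The coordinate ring `R₂ = ℝ[U,V]/(U²+V²+1)` of the affine open `U₂ = D₊(y)` of the
real anisotropic conic `C = V(x²+y²+z²) ⊂ ℙ²_ℝ`. -/
def R2 : Type :=
  MvPolynomial (Fin 2) ℝ ⧸
    Ideal.span {(MvPolynomial.X 0 : MvPolynomial (Fin 2) ℝ) ^ 2 + MvPolynomial.X 1 ^ 2 + 1}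

instance : CommRing R2 := Ideal.Quotient.commRing _
instance : Algebra ℝ R2 := Ideal.Quotient.algebra ℝ

/-- `U`, the image of the first variable in `R₂` (the rational function `x/y`). -/
def U : R2 := Ideal.Quotient.mk _ (MvPolynomial.X 0)

/-- `V`, the image of the second variable in `R₂` (the rational function `z/y`). -/
def V : R2 := Ideal.Quotient.mk _ (MvPolynomial.X 1)

set_option maxHeartbeats 1000000 in
set_option synthInstance.maxHeartbeats 1000000 in
/-- the sequence of `R₂`-module maps
`0 → R₂ → R₂ ⊕ R₂ → R₂ → 0`, `a ↦ (U·a, V·a)` and `(a,b) ↦ −V·a + U·b`, is exact: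
the first map is injective, the second is surjective, and the kernel of the second map
equals the range of the first. -/
theorem statement_15 :
    Function.Injective (fun a : R2 => ((U * a, V * a) : R2 × R2)) ∧
    Function.Surjective (fun p : R2 × R2 => -V * p.1 + U * p.2) ∧
    ∀ p : R2 × R2, -V * p.1 + U * p.2 = 0 ↔ ∃ a : R2, ((U * a, V * a) : R2 × R2) = p := by
  have hrel : U ^ 2 + V ^ 2 + 1 = 0 := by
    have h : (Ideal.Quotient.mk (Ideal.span
        {(MvPolynomial.X 0 : MvPolynomial (Fin 2) ℝ) ^ 2 + MvPolynomial.X 1 ^ 2 + 1}))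
        ((MvPolynomial.X 0 : MvPolynomial (Fin 2) ℝ) ^ 2 + MvPolynomial.X 1 ^ 2 + 1) = 0 :=
      Ideal.Quotient.eq_zero_iff_mem.2 (Ideal.subset_span rfl)
    simp only [map_add, map_pow, map_one] at h
    exact h
  refine ⟨?_, ?_, ?_⟩
  · intro a b hab
    have h1 : U * a = U * b := congrArg Prod.fst hab
    have h2 : V * a = V * b := congrArg Prod.snd hab
    linear_combination (a - b) * hrel - U * h1 - V * h2
  · intro c
    exact ⟨(V * c, -(U * c)), by linear_combination (-c) * hrel⟩
  · rintro ⟨a, b⟩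
    constructor
    · intro h
      refine ⟨-(U * a + V * b), ?_⟩
      simp only [Prod.mk.injEq]
      exact ⟨by linear_combination (-a) * hrel + (-V) * h,
             by linear_combination (-b) * hrel + U * h⟩
    · rintro ⟨t, ht⟩
      have h1 : U * t = a := congrArg Prod.fst ht
      have h2 : V * t = b := congrArg Prod.snd ht
      linear_combination V * h1 - U * h2
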